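/- Let Q be a quasigroup satisfying the identity ((xy)z)y = x(y(zy)) for all x, y, z. Suppose μ is a nonzero measure on Q that is invariant under all right translations, i.e., (R_a)_* μ = μ for all a, and quasi-invariant under left translations with cocycle j : Q → ℝ_{>0}, i.e., (L_a)_* μ = j(a) • μ. Then j(xy) = j(x)j(y) for all x, y. -/

import Mathlib

/-!
Both sides of the identity `((x * y) * z) * y = x * (y * (z * y))` are composites of translations.
Pushing `μ` forward along the left side scales it by `j (x * y)`, along the right side by
`j x * j y` (right translations contribute the factor `1`), and a nonzero finite value of `μ`
lets one cancel `μ`.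
-/

open MeasureTheory

namespace MeasureTheory.Measure

variable {α : Type*} [MeasurableSpace α] {μ : Measure α}

theorem map_comp_eq_smul_of_map_eq_smul {f g : α → α} {c d : ENNReal}
    (hf : Measurable f) (hg : Measurable g) (hfμ : map f μ = c • μ)
    (hgμ : map g μ = d • μ) :
    map (g ∘ f) μ = (c * d) • μ := by
  rw [← map_map hg hf, hfμ, Measure.map_smul, hgμ, smul_smul]

theorem smul_left_cancel_of_ne_zero_of_ne_top {c d : ENNReal} {E : Set α}
    (hE₀ : μ E ≠ 0) (hE : μ E ≠ ⊤) (h : c • μ = d • μ) : c = d := by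
  have hEval : c * μ E = d * μ E := by
    simpa only [smul_apply, smul_eq_mul] using congrArg (fun ν : Measure α => ν E) h
  exact (ENNReal.mul_left_inj hE₀ hE).mp hEval

end MeasureTheory.Measure

theorem cocycle_multiplicative_right_invariant_general {Q : Type*} [Mul Q] [MeasurableSpace Q]
    (moufang : ∀ x y z : Q, ((x * y) * z) * y = x * (y * (z * y)))
    (hmeasL : ∀ a : Q, Measurable (fun x : Q => a * x))
    (hmeasR : ∀ a : Q, Measurable (fun x : Q => x * a))
    (μ : Measure Q)
    (hμ : ∃ E : Set Q, MeasurableSet E ∧ 0 < μ E ∧ μ E < ⊤)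
    (hRinv : ∀ a : Q, Measure.map (fun x : Q => x * a) μ = μ)
    (j : Q → ℝ) (hjpos : ∀ a, 0 < j a)
    (hj : ∀ a : Q, Measure.map (fun x : Q => a * x) μ = ENNReal.ofReal (j a) • μ) :
    ∀ x y : Q, j (x * y) = j x * j y := by
  intro x y
  have hright : ∀ a : Q, Measure.map (fun z : Q => z * a) μ = (1 : ENNReal) • μ := fun a => by
    rw [one_smul, hRinv]
  have hlhs : Measure.map (fun z : Q => ((x * y) * z) * y) μ
      = (ENNReal.ofReal (j (x * y)) * 1) • μ :=
    Measure.map_comp_eq_smul_of_map_eq_smul (hmeasL _) (hmeasR y) (hj _) (hright y)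
  have hrhs : Measure.map (fun z : Q => x * (y * (z * y))) μ
      = ((1 * ENNReal.ofReal (j y)) * ENNReal.ofReal (j x)) • μ :=
    Measure.map_comp_eq_smul_of_map_eq_smul ((hmeasL y).comp (hmeasR y)) (hmeasL x)
      (Measure.map_comp_eq_smul_of_map_eq_smul (hmeasR y) (hmeasL y) (hright y) (hj y)) (hj x)
  obtain ⟨E, -, hE₀, hE⟩ := hμ
  have hscalar : ENNReal.ofReal (j (x * y)) = ENNReal.ofReal (j x * j y) := by
    have h := Measure.smul_left_cancel_of_ne_zero_of_ne_top hE₀.ne' hE.ne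
      ((funext (moufang x y) ▸ hlhs).symm.trans hrhs)
    rw [mul_one, one_mul, mul_comm] at h
    rwa [ENNReal.ofReal_mul (hjpos x).le]
  exact (ENNReal.ofReal_eq_ofReal_iff (hjpos _).le (mul_pos (hjpos x) (hjpos y)).le).mp hscalar

/-- If μ is right-invariant and left quasi-invariant on a quasigroup satisfying
the Moufang-type identity (N1), then the left cocycle is multiplicative. -/
theorem cocycle_multiplicative_right_invariant {Q : Type*} [Mul Q] [MeasurableSpace Q]
    (hL : ∀ a b : Q, ∃! x : Q, a * x = b)
    (hR : ∀ a b : Q, ∃! y : Q, y * a = b)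
    (moufang : ∀ x y z : Q, ((x * y) * z) * y = x * (y * (z * y)))
    (hmeasL : ∀ a : Q, Measurable (fun x : Q => a * x))
    (hmeasR : ∀ a : Q, Measurable (fun x : Q => x * a))
    (μ : Measure Q)
    (hμ : ∃ E : Set Q, MeasurableSet E ∧ 0 < μ E ∧ μ E < ⊤)
    (hRinv : ∀ a : Q, Measure.map (fun x : Q => x * a) μ = μ)
    (j : Q → ℝ) (hjpos : ∀ a, 0 < j a)
    (hj : ∀ a : Q, Measure.map (fun x : Q => a * x) μ = ENNReal.ofReal (j a) • μ) :
    ∀ x y : Q, j (x * y) = j x * j y :=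
  cocycle_multiplicative_right_invariant_general moufang hmeasL hmeasR μ hμ hRinv j hjpos hj
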